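/- Let B be a finite left regular band, k a commutative ring with unit, and n a natural number such that the poset Λ(B) = {Bb : b ∈ B}, ordered by inclusion, contains no strictly increasing chain of n+1 elements. Say that r ∈ kB lies in the kernel of the support map if for every c ∈ B one has Σ_{b ∈ B, Bb = Bc} r(b) = 0 (the coefficients of r sum to zero over each class {b : Bb = Bc}). Then for any r₁, …, r_{n+1} ∈ kB all lying in the kernel of the support map, the (ordered) product r₁·r₂⋯r_{n+1} = 0 in kB. (Thus the kernel of the support map is a nilpotent ideal.) -/

import Mathlib

/-!
Multiplying a basis element `w` on the right by an element `s` of the kernel of the support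
map gives `∑ b, s(b) (w b)`. Since `B` is a left regular band, `B(wb) ⊆ Bw`, with equality
exactly when `wb = w`, i.e. when `Bw ⊆ Bb`. This condition only depends on the class of `b`,
so the terms with `wb = w` cancel, and `w s` is a combination of basis elements whose principal
left ideals lie strictly below `Bw`. Hence each factor from the kernel lowers the length of the
longest chain of principal left ideals below the support, and the `n` factors after the first
kill everything.
-/

/-- The principal left ideal of `a` in a semigroup: `Ba = {x * a : x ∈ B}`. -/
def leftIdeal {B : Type*} [Mul B] (a : B) : Set B := {x : B | ∃ y : B, y * a = x}

open MonoidAlgebra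

section LeftRegularBand

variable {B : Type*} [Semigroup B]

theorem mem_leftIdeal_iff_mul_eq (idem : ∀ x : B, x * x = x) {z a : B} :
    z ∈ leftIdeal a ↔ z * a = z := by
  constructor
  · rintro ⟨y, rfl⟩
    rw [mul_assoc, idem]
  · exact fun h => ⟨z, h⟩

theorem leftIdeal_subset_leftIdeal_iff (idem : ∀ x : B, x * x = x) {w b : B} :
    leftIdeal w ⊆ leftIdeal b ↔ w * b = w := by
  refine ⟨fun h => (mem_leftIdeal_iff_mul_eq idem).1 (h ⟨w, idem w⟩), ?_⟩
  rintro h z ⟨y, rfl⟩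
  rw [mem_leftIdeal_iff_mul_eq idem, mul_assoc, h]

theorem leftIdeal_mul_lt (idem : ∀ x : B, x * x = x) (lrb : ∀ x y : B, x * y * x = x * y)
    {w b : B} (h : w * b ≠ w) : leftIdeal (w * b) < leftIdeal w := by
  refine ⟨(leftIdeal_subset_leftIdeal_iff idem).2 (lrb w b), fun hle => h ?_⟩
  have := (leftIdeal_subset_leftIdeal_iff idem).1 hle
  rwa [← mul_assoc, idem] at this

end LeftRegularBand

theorem Finset.sum_filter_comp_eq_zero {ι κ M : Type*} [Fintype ι] [DecidableEq κ]
    [AddCommMonoid M] {g : ι → κ} {f : ι → M} (hf : ∀ i, ∑ j with g j = g i, f j = 0)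
    (p : κ → Prop) [DecidablePred p] : ∑ i with p (g i), f i = 0 := by
  rw [← Finset.sum_fiberwise_of_maps_to (t := Finset.univ.image g) (g := g)
    (fun i _ => Finset.mem_image_of_mem g (Finset.mem_univ i))]
  refine Finset.sum_eq_zero fun j hj => ?_
  obtain ⟨i, -, rfl⟩ := Finset.mem_image.1 hj
  rw [Finset.filter_filter]
  by_cases hp : p (g i)
  · rw [← hf i]
    refine Finset.sum_congr (Finset.filter_congr fun j _ => ?_) fun _ _ => rfl
    exact and_iff_right_of_imp fun hj => hj ▸ hp
  · refine Finset.sum_eq_zero fun j hj => ?_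
    obtain ⟨hpj, hj⟩ := (Finset.mem_filter.1 hj).2
    exact absurd (hj ▸ hpj) hp

section SupportKernel

variable {B : Type*} [Semigroup B] [Fintype B] {k : Type*} [Semiring k]

open Classical in
def InSupportKer (s : MonoidAlgebra k B) : Prop :=
  ∀ c : B, (∑ b : B, if leftIdeal b = leftIdeal c then s.coeff b else 0) = 0

theorem InSupportKer.sum_filter_mul_eq_self [DecidableEq B] (idem : ∀ x : B, x * x = x)
    {s : MonoidAlgebra k B} (hs : InSupportKer s) (w : B) :
    ∑ b with w * b = w, s.coeff b = 0 := by
  classical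
  simp_rw [← leftIdeal_subset_leftIdeal_iff idem]
  refine Finset.sum_filter_comp_eq_zero (g := fun b : B => leftIdeal b) (fun c => ?_)
    (leftIdeal w ⊆ ·)
  rw [Finset.sum_filter]
  exact hs c

theorem single_one_mul_eq_sum (w : B) (s : MonoidAlgebra k B) :
    single w 1 * s = ∑ b, s.coeff b • single (w * b) 1 := by
  conv_lhs => rw [← sum_coeff_single s, Finsupp.sum_fintype _ _ fun b => single_zero b]
  simp only [Finset.mul_sum, single_mul_single, one_mul, smul_single', mul_one]

theorem InSupportKer.single_one_mul_eq_sum_mul_ne [DecidableEq B] (idem : ∀ x : B, x * x = x)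
    {s : MonoidAlgebra k B} (hs : InSupportKer s) (w : B) :
    single w 1 * s = ∑ b with w * b ≠ w, s.coeff b • single (w * b) 1 := by
  have hfixed : ∑ b with w * b = w, s.coeff b • single (w * b) (1 : k) = 0 := by
    rw [Finset.sum_congr rfl fun b hb => by rw [(Finset.mem_filter.1 hb).2], ← Finset.sum_smul,
      hs.sum_filter_mul_eq_self idem, zero_smul]
  rw [single_one_mul_eq_sum, ← Finset.sum_filter_add_sum_filter_not _ (fun b => w * b = w),
    hfixed, zero_add]

end SupportKernel

section Chains

variable {B : Type*} [Semigroup B]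

def HasLeftIdealChainFrom (m : ℕ) (w : B) : Prop :=
  ∃ c : Fin (m + 1) → B, c 0 = w ∧ StrictAnti fun i => leftIdeal (c i)

theorem hasLeftIdealChainFrom_zero (w : B) : HasLeftIdealChainFrom 0 w :=
  ⟨fun _ => w, rfl, Subsingleton.strictAnti (α := Fin 1) _⟩

theorem HasLeftIdealChainFrom.cons {m : ℕ} {v w : B} (hv : HasLeftIdealChainFrom m v)
    (hvw : leftIdeal v < leftIdeal w) : HasLeftIdealChainFrom (m + 1) w := by
  obtain ⟨c, rfl, hc⟩ := hv
  refine ⟨Matrix.vecCons w c, rfl, ?_⟩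
  change StrictAnti (leftIdeal ∘ Matrix.vecCons w c)
  rw [show leftIdeal ∘ Matrix.vecCons w c = Matrix.vecCons (leftIdeal w) (leftIdeal ∘ c) from
    Fin.comp_cons _ _ _, strictAnti_vecCons]
  exact ⟨hvw, hc⟩

noncomputable def chainFreeSpan (k : Type*) [Semiring k] (m : ℕ) :
    Submodule k (MonoidAlgebra k B) :=
  Submodule.span k ((fun w => single w 1) '' {w | ¬ HasLeftIdealChainFrom m w})

variable {k : Type*} [Semiring k]

theorem chainFreeSpan_zero : chainFreeSpan k 0 = (⊥ : Submodule k (MonoidAlgebra k B)) := by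
  simp [chainFreeSpan, hasLeftIdealChainFrom_zero]

theorem chainFreeSpan_eq_top {m : ℕ} (h : ∀ w : B, ¬ HasLeftIdealChainFrom m w) :
    (chainFreeSpan k m : Submodule k (MonoidAlgebra k B)) = ⊤ := by
  refine Submodule.eq_top_iff'.2 fun x => ?_
  induction x using MonoidAlgebra.induction_linear with
  | zero => exact zero_mem _
  | add x y hx hy => exact add_mem hx hy
  | single w a =>
    rw [← mul_one a, ← smul_single']
    exact Submodule.smul_mem _ a (Submodule.subset_span ⟨w, h w, rfl⟩)

theorem mul_mem_chainFreeSpan [Fintype B] (idem : ∀ x : B, x * x = x)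
    (lrb : ∀ x y : B, x * y * x = x * y) {m : ℕ} {x s : MonoidAlgebra k B}
    (hx : x ∈ chainFreeSpan k (m + 1)) (hs : InSupportKer s) : x * s ∈ chainFreeSpan k m := by
  classical
  induction hx using Submodule.span_induction with
  | mem _ hy =>
    obtain ⟨w, hw, rfl⟩ := hy
    rw [hs.single_one_mul_eq_sum_mul_ne idem]
    refine Submodule.sum_mem _ fun b hb => Submodule.smul_mem _ _ (Submodule.subset_span ?_)
    exact ⟨w * b, fun hwb => hw (hwb.cons (leftIdeal_mul_lt idem lrb (Finset.mem_filter.1 hb).2)),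
      rfl⟩
  | zero => rw [zero_mul]; exact zero_mem _
  | add x y _ _ hx hy => rw [add_mul]; exact add_mem hx hy
  | smul a x _ hx => rw [smul_mul_assoc]; exact Submodule.smul_mem _ a hx

theorem foldl_mul_mem_chainFreeSpan [Fintype B] (idem : ∀ x : B, x * x = x)
    (lrb : ∀ x y : B, x * y * x = x * y) {L : List (MonoidAlgebra k B)}
    (hL : ∀ s ∈ L, InSupportKer s) {m : ℕ} {x : MonoidAlgebra k B}
    (hx : x ∈ chainFreeSpan k (m + L.length)) : L.foldl (· * ·) x ∈ chainFreeSpan k m := by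
  induction L generalizing x with
  | nil => exact hx
  | cons s L ih =>
    rw [List.length_cons, ← add_assoc] at hx
    exact ih (fun t ht => hL t (List.mem_cons_of_mem s ht))
      (mul_mem_chainFreeSpan idem lrb hx (hL s List.mem_cons_self))

end Chains

open Classical in
/-- If the poset `Λ(B)` of principal left ideals of a finite left regular band `B` has
no strictly increasing chain of `n+1` elements, then any product of `n+1` elements of
the kernel of the support map vanishes: the kernel is a nilpotent ideal. -/
theorem stmt10 {B : Type*} [Semigroup B] [Fintype B] {k : Type*} [CommRing k]
    (idem : ∀ x : B, x * x = x) (lrb : ∀ x y : B, x * y * x = x * y)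
    (n : ℕ)
    (hchain : ∀ c : Fin (n + 1) → B, ¬ StrictMono (fun i => leftIdeal (c i)))
    (r : Fin (n + 1) → MonoidAlgebra k B)
    (hker : ∀ i : Fin (n + 1), ∀ c : B,
      (∑ b : B, if leftIdeal b = leftIdeal c then (r i).coeff b else 0) = 0) :
    (List.ofFn (fun i : Fin n => r i.succ)).foldl (· * ·) (r 0) = 0 := by
  have htail : ∀ s ∈ List.ofFn (fun i : Fin n => r i.succ), InSupportKer s := by
    rw [List.forall_mem_ofFn_iff]
    exact fun i => hker i.succ
  have hhead : r 0 ∈ chainFreeSpan k (0 + (List.ofFn fun i : Fin n => r i.succ).length) := by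
    rw [List.length_ofFn, zero_add, chainFreeSpan_eq_top]
    · trivial
    · rintro w ⟨c, -, hc⟩
      exact hchain (c ∘ Fin.rev) (hc.comp Fin.rev_strictAnti)
  simpa [chainFreeSpan_zero] using foldl_mul_mem_chainFreeSpan idem lrb htail hhead
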